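/- Let p be a prime and R a commutative ring of characteristic p whose Frobenius endomorphism x ↦ x^p is injective. Then for every n ≥ 1 one has {a ∈ ℤR : φ^{n−1}(a) ∈ I^n} = {a ∈ ℤR : φ^i(a) ∈ I^n for some i ≥ 0}; i.e. if some iterate of φ carries a into I^n then already φ^{n−1}(a) ∈ I^n. -/

import Mathlib

/-!
The Teichmüller map `r ↦ [r]` extends to a ring map `θ : ℤR → W(R)`. It carries `I^n` into
`V^n W(R)`, the kernel of truncation to `W_n(R)`, and it intertwines `φ` with the Witt vector
Frobenius, which in characteristic `p` raises every Witt coordinate to the `p`-th power and so is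
injective on coordinates. Hence `φ^i a ∈ I^n` forces `θ a ∈ V^n W(R)`.

Conversely, `θ b ∈ V^(m+1) W(R)` gives `φ^m b ∈ I^(m+1)` by induction on `m`: for `e ∈ I^m` one
has `φ e ≡ p^m [c] mod I^(m+1)`, and the `m`-th Witt coordinate of `θ (p^m [c]) = p^m [c]` is
`c^(p^m)`, which therefore vanishes.
-/

noncomputable section

/-- The canonical projection `ℤR → R` from the monoid algebra of the
multiplicative monoid of `R`, sending `[r]` to `r`. -/
def piHom (R : Type*) [CommRing R] : MonoidAlgebra ℤ R →+* R :=
  (MonoidAlgebra.lift ℤ R R (MonoidHom.id R)).toRingHom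

/-- `I = ker (ℤR → R)`. -/
def Iideal (R : Type*) [CommRing R] : Ideal (MonoidAlgebra ℤ R) :=
  RingHom.ker (piHom R)

/-- The lifted Frobenius `φ : ℤR → ℤR`, `φ [r] = [r^p]`. -/
def phiZR (p : ℕ) (R : Type*) [CommRing R] :
    MonoidAlgebra ℤ R →+* MonoidAlgebra ℤ R :=
  (MonoidAlgebra.lift ℤ (MonoidAlgebra ℤ R) R
    ((MonoidAlgebra.of ℤ R).comp (powMonoidHom p))).toRingHom

/-- The `k`-fold iterate `φ^k` of the lifted Frobenius, as a ring map. -/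
def phiPow (p : ℕ) (R : Type*) [CommRing R] :
    ℕ → (MonoidAlgebra ℤ R →+* MonoidAlgebra ℤ R)
  | 0 => RingHom.id _
  | k + 1 => (phiZR p R).comp (phiPow p R k)

open MonoidAlgebra WittVector

namespace MonoidAlgebra

variable {M : Type*} [Monoid M]

lemma int_ringHom_ext {A : Type*} [Semiring A] {f g : MonoidAlgebra ℤ M →+* A}
    (h : ∀ m, f (of ℤ M m) = g (of ℤ M m)) : f = g :=
  ringHom_ext' (RingHom.ext_int _ _) (MonoidHom.ext h)

lemma natCast_mem_nonunits (p : ℕ) [Fact p.Prime] : (p : MonoidAlgebra ℤ M) ∈ nonunits _ :=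
  fun hu => by simpa using hu.map (lift ℤ (ZMod p) M 1).toRingHom

end MonoidAlgebra

section Generic

variable {R : Type*} [CommRing R]

@[simp]
lemma piHom_of (r : R) : piHom R (of ℤ R r) = r := by
  simp [piHom]

@[simp]
lemma phiZR_of (p : ℕ) (r : R) : phiZR p R (of ℤ R r) = of ℤ R (r ^ p) := by
  simp [phiZR]

lemma phiPow_succ_apply (p k : ℕ) (a : MonoidAlgebra ℤ R) :
    phiPow p R (k + 1) a = phiZR p R (phiPow p R k a) :=
  rfl

@[simp]
lemma phiPow_of (p k : ℕ) (r : R) : phiPow p R k (of ℤ R r) = of ℤ R (r ^ p ^ k) := by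
  induction k with
  | zero => rw [pow_zero, pow_one]; rfl
  | succ k ih => rw [phiPow_succ_apply, ih, phiZR_of, ← pow_mul, ← pow_succ]


lemma sub_of_piHom_mem_Iideal (a : MonoidAlgebra ℤ R) : a - of ℤ R (piHom R a) ∈ Iideal R := by
  rw [Iideal, RingHom.mem_ker, map_sub, piHom_of, sub_self]

lemma of_add_sub_of_add_mem_Iideal (c d : R) :
    of ℤ R c + of ℤ R d - of ℤ R (c + d) ∈ Iideal R := by
  rw [Iideal, RingHom.mem_ker, map_sub, map_add, piHom_of, piHom_of, piHom_of, sub_self]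

lemma phiZR_sub_pow_mem_span (p : ℕ) [Fact p.Prime] (x : MonoidAlgebra ℤ R) :
    phiZR p R x - x ^ p ∈ Ideal.span {(p : MonoidAlgebra ℤ R)} := by
  set J := Ideal.span {(p : MonoidAlgebra ℤ R)}
  have := CharP.quotient (MonoidAlgebra ℤ R) p (natCast_mem_nonunits (M := R) p)
  have h : (Ideal.Quotient.mk J).comp (phiZR p R) = (frobenius _ p).comp (Ideal.Quotient.mk J) :=
    int_ringHom_ext fun r => by
      rw [RingHom.comp_apply, RingHom.comp_apply, phiZR_of, frobenius_def, ← map_pow, ← map_pow]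
  rw [← Ideal.Quotient.eq, map_pow, ← frobenius_def]
  exact RingHom.congr_fun h x

end Generic

section CharP

variable {p : ℕ} {R : Type*} [CommRing R] [CharP R p]

lemma natCast_mem_Iideal : (p : MonoidAlgebra ℤ R) ∈ Iideal R := by
  rw [Iideal, RingHom.mem_ker, map_natCast, CharP.cast_eq_zero]

variable [hp : Fact p.Prime]

lemma piHom_phiZR (a : MonoidAlgebra ℤ R) : piHom R (phiZR p R a) = piHom R a ^ p := by
  have h : (piHom R).comp (phiZR p R) = (frobenius R p).comp (piHom R) :=
    int_ringHom_ext fun r => by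
      rw [RingHom.comp_apply, RingHom.comp_apply, phiZR_of, piHom_of, piHom_of, frobenius_def]
  exact RingHom.congr_fun h a

lemma map_phiZR_Iideal_le : (Iideal R).map (phiZR p R) ≤ Iideal R := by
  rw [Ideal.map_le_iff_le_comap]
  intro a ha
  rw [Ideal.mem_comap, Iideal, RingHom.mem_ker, piHom_phiZR, RingHom.mem_ker.1 ha,
    zero_pow hp.out.ne_zero]

lemma phiZR_mem_Iideal_pow {n : ℕ} {a : MonoidAlgebra ℤ R} (ha : a ∈ Iideal R ^ n) :
    phiZR p R a ∈ Iideal R ^ n := by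
  refine Ideal.pow_right_mono map_phiZR_Iideal_le n ?_
  rw [← Ideal.map_pow]
  exact Ideal.mem_map_of_mem _ ha

lemma exists_phiZR_sub_mem_Iideal_sq {e : MonoidAlgebra ℤ R} (he : e ∈ Iideal R) :
    ∃ c : R, phiZR p R e - p * of ℤ R c ∈ Iideal R ^ 2 := by
  -- `φ e = e ^ p + d p` with `e ^ p ∈ I ^ p ⊆ I ^ 2` and `d p ≡ p [π d] mod I ^ 2`
  obtain ⟨d, hd⟩ := Ideal.mem_span_singleton'.1 (phiZR_sub_pow_mem_span p e)
  refine ⟨piHom R d, ?_⟩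
  have key : phiZR p R e - p * of ℤ R (piHom R d) = e ^ p + p * (d - of ℤ R (piHom R d)) := by
    linear_combination -hd
  rw [key]
  refine add_mem (Ideal.pow_le_pow_right hp.out.two_le (Ideal.pow_mem_pow he p)) ?_
  rw [sq]
  exact Ideal.mul_mem_mul natCast_mem_Iideal (sub_of_piHom_mem_Iideal d)

lemma exists_phiZR_sub_mem_Iideal_pow_succ (m : ℕ) {e : MonoidAlgebra ℤ R}
    (he : e ∈ Iideal R ^ m) : ∃ c : R, phiZR p R e - p ^ m * of ℤ R c ∈ Iideal R ^ (m + 1) := by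
  induction m generalizing e with
  | zero => exact ⟨_, by simpa using sub_of_piHom_mem_Iideal (phiZR p R e)⟩
  | succ m ih =>
    rw [pow_succ] at he
    refine Submodule.mul_induction_on he (fun x hx y hy => ?_) ?_
    · obtain ⟨cx, hcx⟩ := ih hx
      obtain ⟨cy, hcy⟩ := exists_phiZR_sub_mem_Iideal_sq hy
      refine ⟨cx * cy, ?_⟩
      have key : phiZR p R (x * y) - p ^ (m + 1) * of ℤ R (cx * cy) =
          phiZR p R x * (phiZR p R y - p * of ℤ R cy) +
            p * of ℤ R cy * (phiZR p R x - p ^ m * of ℤ R cx) := by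
        rw [map_mul, map_mul]
        ring
      rw [key]
      refine add_mem ?_ ?_
      · have := Ideal.mul_mem_mul (phiZR_mem_Iideal_pow hx) hcy
        rwa [← pow_add] at this
      · rw [pow_succ']
        exact Ideal.mul_mem_mul (Ideal.mul_mem_right _ _ natCast_mem_Iideal) hcx
    · rintro x y ⟨cx, hcx⟩ ⟨cy, hcy⟩
      refine ⟨cx + cy, ?_⟩
      have key : phiZR p R (x + y) - p ^ (m + 1) * of ℤ R (cx + cy) =
          (phiZR p R x - p ^ (m + 1) * of ℤ R cx) + (phiZR p R y - p ^ (m + 1) * of ℤ R cy) +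
            p ^ (m + 1) * (of ℤ R cx + of ℤ R cy - of ℤ R (cx + cy)) := by
        rw [map_add]
        ring
      rw [key, pow_succ _ (m + 1)]
      exact add_mem (add_mem hcx hcy) (Ideal.mul_mem_mul
        (Ideal.pow_mem_pow natCast_mem_Iideal _) (of_add_sub_of_add_mem_Iideal cx cy))

end CharP

lemma iterateFrobenius_injective {p : ℕ} {R : Type*} [CommRing R] [ExpChar R p]
    (hFrob : Function.Injective fun x : R => x ^ p) (k : ℕ) :
    Function.Injective (iterateFrobenius R p k) := by
  rw [coe_iterateFrobenius]
  exact hFrob.iterate k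

namespace WittVector

variable {p : ℕ} [Fact p.Prime] {R : Type*} [CommRing R]

lemma ker_truncate_le_ker_truncate {m n : ℕ} (h : m ≤ n) :
    RingHom.ker (truncate (p := p) (R := R) n) ≤ RingHom.ker (truncate m) := fun x hx => by
  rw [mem_ker_truncate] at hx ⊢
  exact fun i hi => hx i (hi.trans_le h)

lemma ker_truncate_mul_le [CharP R p] (a b : ℕ) :
    RingHom.ker (truncate (p := p) (R := R) a) * RingHom.ker (truncate b) ≤
      RingHom.ker (truncate (a + b)) := by
  refine Ideal.mul_le.2 fun x hx y hy => ?_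
  rw [mem_ker_truncate] at hx hy ⊢
  rw [eq_iterate_verschiebung hx, eq_iterate_verschiebung hy, iterate_verschiebung_mul]
  exact fun i hi => iterate_verschiebung_coeff_eq_zero _ hi

lemma map_mem_ker_truncate_iff {S : Type*} [CommRing S] {f : R →+* S}
    (hf : Function.Injective f) (n : ℕ) (x : WittVector p R) :
    map f x ∈ RingHom.ker (truncate n) ↔ x ∈ RingHom.ker (truncate n) := by
  simp only [mem_ker_truncate, map_coeff, _root_.map_eq_zero_iff f hf]

lemma eq_zero_of_teichmuller_mul_pow_mem_ker_truncate [CharP R p]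
    (hFrob : Function.Injective fun x : R => x ^ p) {c : R} {k : ℕ}
    (h : teichmuller p c * (p : WittVector p R) ^ k ∈ RingHom.ker (truncate (k + 1))) :
    c = 0 := by
  have hcoeff := (mem_ker_truncate _ _).1 h (0 + k) (by omega)
  rw [mul_pow_charP_coeff_succ, teichmuller_coeff_zero, ← iterateFrobenius_def] at hcoeff
  exact (_root_.map_eq_zero_iff _ (iterateFrobenius_injective hFrob k)).1 hcoeff

end WittVector

section TeichmullerLift

variable (p : ℕ) [Fact p.Prime] {R : Type*} [CommRing R]

def teichmullerLift : MonoidAlgebra ℤ R →+* WittVector p R :=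
  (lift ℤ (WittVector p R) R (teichmuller p)).toRingHom

@[simp]
lemma teichmullerLift_of (r : R) : teichmullerLift p (of ℤ R r) = teichmuller p r := by
  simp [teichmullerLift]

lemma coeff_zero_teichmullerLift (a : MonoidAlgebra ℤ R) :
    (teichmullerLift p a).coeff 0 = piHom R a := by
  have h : constantCoeff.comp (teichmullerLift p) = piHom R :=
    int_ringHom_ext fun r => by
      rw [RingHom.comp_apply, teichmullerLift_of, constantCoeff_apply, teichmuller_coeff_zero,
        piHom_of]
  exact RingHom.congr_fun h a

lemma Iideal_le_comap_ker_truncate_one :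
    Iideal R ≤ (RingHom.ker (truncate 1)).comap (teichmullerLift p (R := R)) := fun a ha => by
  rw [Ideal.mem_comap, mem_ker_truncate, Nat.forall_lt_succ_left, coeff_zero_teichmullerLift]
  exact ⟨ha, fun _ h => (Nat.not_lt_zero _ h).elim⟩

lemma Iideal_pow_le_comap_ker_truncate [CharP R p] (n : ℕ) :
    Iideal R ^ n ≤ (RingHom.ker (truncate n)).comap (teichmullerLift p (R := R)) := by
  induction n with
  | zero => exact fun a _ => (mem_ker_truncate _ _).2 fun _ h => (Nat.not_lt_zero _ h).elim
  | succ n ih =>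
    rw [pow_succ]
    exact (Ideal.mul_mono ih (Iideal_le_comap_ker_truncate_one p)).trans
      ((Ideal.le_comap_mul _).trans (Ideal.comap_mono (ker_truncate_mul_le n 1)))

lemma teichmullerLift_phiPow [ExpChar R p] (k : ℕ) (a : MonoidAlgebra ℤ R) :
    teichmullerLift p (phiPow p R k a) =
      WittVector.map (iterateFrobenius R p k) (teichmullerLift p a) := by
  have h : (teichmullerLift p).comp (phiPow p R k) =
      (WittVector.map (iterateFrobenius R p k)).comp (teichmullerLift p) :=
    int_ringHom_ext fun r => by
      rw [RingHom.comp_apply, RingHom.comp_apply, phiPow_of, teichmullerLift_of,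
        teichmullerLift_of, map_teichmuller, iterateFrobenius_def]
  exact RingHom.congr_fun h a

variable [CharP R p] (hFrob : Function.Injective fun x : R => x ^ p)
include hFrob

lemma teichmullerLift_phiPow_mem_ker_truncate_iff (k n : ℕ) (a : MonoidAlgebra ℤ R) :
    teichmullerLift p (phiPow p R k a) ∈ RingHom.ker (truncate n) ↔
      teichmullerLift p a ∈ RingHom.ker (truncate n) := by
  rw [teichmullerLift_phiPow,
    WittVector.map_mem_ker_truncate_iff (iterateFrobenius_injective hFrob k)]

lemma phiPow_mem_Iideal_pow_succ {m : ℕ} {b : MonoidAlgebra ℤ R}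
    (hb : teichmullerLift p b ∈ RingHom.ker (truncate (m + 1))) :
    phiPow p R m b ∈ Iideal R ^ (m + 1) := by
  induction m with
  | zero =>
    rw [pow_one, Iideal, RingHom.mem_ker, ← coeff_zero_teichmullerLift p]
    exact (mem_ker_truncate _ _).1 hb 0 Nat.one_pos
  | succ m ih =>
    obtain ⟨c, hc⟩ := exists_phiZR_sub_mem_Iideal_pow_succ (m + 1)
      (ih (ker_truncate_le_ker_truncate (Nat.le_succ _) hb))
    rw [← phiPow_succ_apply] at hc
    obtain rfl : c = 0 := by
      refine eq_zero_of_teichmuller_mul_pow_mem_ker_truncate hFrob (k := m + 1) ?_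
      have h := sub_mem ((teichmullerLift_phiPow_mem_ker_truncate_iff p hFrob (m + 1) _ _).2 hb)
        (Iideal_pow_le_comap_ker_truncate p _ hc)
      rwa [← map_sub, sub_sub_cancel, map_mul, map_pow, map_natCast, teichmullerLift_of,
        mul_comm] at h
    have hp0 : (p : MonoidAlgebra ℤ R) ^ (m + 1) * of ℤ R 0 ∈ Iideal R ^ (m + 2) := by
      rw [pow_succ _ (m + 1)]
      exact Ideal.mul_mem_mul (Ideal.pow_mem_pow natCast_mem_Iideal _)
        (by rw [Iideal, RingHom.mem_ker, piHom_of])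
    simpa using add_mem hc hp0

end TeichmullerLift

/-- Let `p` be prime and `R` a commutative ring of characteristic `p` whose
Frobenius is injective.  Then for `n ≥ 1`,
`{a ∈ ℤR : φ^{n-1}(a) ∈ I^n} = {a ∈ ℤR : φ^i(a) ∈ I^n for some i ≥ 0}`. -/
theorem statement16 (p : ℕ) [Fact p.Prime] (R : Type*) [CommRing R] [CharP R p]
    (hFrob : Function.Injective fun x : R => x ^ p) (n : ℕ) (hn : 1 ≤ n) :
    ∀ a : MonoidAlgebra ℤ R,
      phiPow p R (n - 1) a ∈ (Iideal R) ^ n ↔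
        ∃ i : ℕ, phiPow p R i a ∈ (Iideal R) ^ n := by
  intro a
  refine ⟨fun h => ⟨n - 1, h⟩, fun ⟨i, hi⟩ => ?_⟩
  obtain ⟨m, rfl⟩ := Nat.exists_eq_add_of_le' hn
  have hker := (teichmullerLift_phiPow_mem_ker_truncate_iff p hFrob i _ a).1
    (Iideal_pow_le_comap_ker_truncate p _ hi)
  exact phiPow_mem_Iideal_pow_succ p hFrob hker

end
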